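/- arXiv:2510.03352 — 5 statements merged into one kernel-verified Lean document; each statement's English description precedes it below -/
import Mathlib

section
/- Let (X0, X_t, X_{t+1}, Y, S) be random variables such that (i) S is conditionally independent of (X_t, X_{t+1}, Y) given X0, (ii) X0 is conditionally independent of X_{t+1} given (X_t, Y), and (iii) the conditional density of S given X0 = x0 is proportional (in x0, for fixed s) to exp(r(x0; s)/τ). Then the conditional density of X_t given (X_{t+1}, Y, S) satisfies p(x_t | x_{t+1}, y, s) ∝ p(x_t | x_{t+1}, y) · E[exp(r(X0; s)/τ) | X_t = x_t, Y = y], where the proportionality constant depends only on (x_{t+1}, y, s). -/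
open MeasureTheory

/-!
Under the two factorizations the joint density is `c(s) · exp(r(x0;s)/τ) · a(x0,xt,y) · b(xt,xt1,y)`.
Integrating out `x0` gives `c(s) · b(xt,xt1,y) · ∫ exp(r/τ) · a`. On the right-hand side the factor
`∫ b(xt,·,y)` cancels from the conditional law of `X0` given `(Xt,Y)`, whose weight is thus `a / ∫ a`,
while `p(xt | xt1, y) = (∫ a) · b / Z` with `Z` independent of `xt`; the `∫ a` cancel, leaving `C = c(s) · Z`.
-/

section ProductDensity

variable {α β : Type*} [MeasurableSpace α] [MeasurableSpace β] {μ : Measure α} {ν : Measure β}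

theorem integral_integral_mul_eq_mul (a : α → ℝ) (b : β → ℝ) :
    ∫ x, ∫ z, a x * b z ∂ν ∂μ = (∫ x, a x ∂μ) * ∫ z, b z ∂ν := by
  simp_rw [integral_const_mul, integral_mul_const]

theorem integral_mul_marginal_div_eq (f a : α → ℝ) {b : β → ℝ} (hb : ∫ z, b z ∂ν ≠ 0) :
    ∫ x, f x * ((∫ z, a x * b z ∂ν) / ∫ x', ∫ z, a x' * b z ∂ν ∂μ) ∂μ
      = (∫ x, f x * a x ∂μ) / ∫ x, a x ∂μ := by
  simp_rw [integral_integral_mul_eq_mul, integral_const_mul, mul_div_mul_right _ _ hb,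
    ← mul_div_assoc, integral_div]

end ProductDensity

theorem stmt2_general {d m k : ℕ}
    (p : EuclideanSpace ℝ (Fin d) → EuclideanSpace ℝ (Fin d) → EuclideanSpace ℝ (Fin d) →
      EuclideanSpace ℝ (Fin m) → EuclideanSpace ℝ (Fin k) → ℝ)
    (g : EuclideanSpace ℝ (Fin d) → EuclideanSpace ℝ (Fin k) → ℝ)
    (h : EuclideanSpace ℝ (Fin d) → EuclideanSpace ℝ (Fin d) → EuclideanSpace ℝ (Fin d) →
      EuclideanSpace ℝ (Fin m) → ℝ)
    (a : EuclideanSpace ℝ (Fin d) → EuclideanSpace ℝ (Fin d) → EuclideanSpace ℝ (Fin m) → ℝ)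
    (b : EuclideanSpace ℝ (Fin d) → EuclideanSpace ℝ (Fin d) → EuclideanSpace ℝ (Fin m) → ℝ)
    (c : EuclideanSpace ℝ (Fin k) → ℝ)
    (r : EuclideanSpace ℝ (Fin d) → EuclideanSpace ℝ (Fin k) → ℝ)
    (τ : ℝ)
    (hfac : ∀ x0 xt xt1 y s, p x0 xt xt1 y s = g x0 s * h x0 xt xt1 y)
    (hg : ∀ x0 s, g x0 s = c s * Real.exp (r x0 s / τ))
    (hcpos : ∀ s, 0 < c s)
    (hci : ∀ x0 xt xt1 y, h x0 xt xt1 y = a x0 xt y * b xt xt1 y)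
    (xt1 : EuclideanSpace ℝ (Fin d)) (y : EuclideanSpace ℝ (Fin m))
    (s : EuclideanSpace ℝ (Fin k))
    (hden : ∀ xt, 0 < ∫ x0, ∫ xt1', h x0 xt xt1' y)
    (hden1 : 0 < ∫ xt, ∫ x0, h x0 xt xt1 y) :
    ∃ C : ℝ, 0 < C ∧ ∀ xt : EuclideanSpace ℝ (Fin d),
      (∫ x0, p x0 xt xt1 y s)
        = C * ((∫ x0, h x0 xt xt1 y) / (∫ xt', ∫ x0, h x0 xt' xt1 y))
          * (∫ x0, Real.exp (r x0 s / τ) *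
              ((∫ xt1', h x0 xt xt1' y) / (∫ x0', ∫ xt1', h x0' xt xt1' y))) := by
  refine ⟨c s * ∫ xt', ∫ x0, h x0 xt' xt1 y, mul_pos (hcpos s) hden1, fun xt => ?_⟩
  have hAB := (hden xt).ne'
  simp only [hci, integral_integral_mul_eq_mul] at hAB
  obtain ⟨hA, hB⟩ := mul_ne_zero_iff.mp hAB
  have hjoint : ∫ x0, p x0 xt xt1 y s
      = c s * b xt xt1 y * ∫ x0, Real.exp (r x0 s / τ) * a x0 xt y := by
    rw [← integral_const_mul]
    congr 1 with x0
    rw [hfac, hg, hci]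
    ring
  have hmarg : ∫ x0, a x0 xt y * b xt xt1 y = (∫ x0, a x0 xt y) * b xt xt1 y :=
    integral_mul_const _ _
  have hZ := hden1.ne'
  simp only [hci] at hZ ⊢
  rw [hjoint, hmarg, integral_mul_marginal_div_eq _ _ hB]
  field_simp

/-- Reward-tilted conditional posterior for the reverse diffusion step.
With joint density `p(x0,xt,xt1,y,s) = g(x0,s)·h(x0,xt,xt1,y)` (S ⟂ (Xt,Xt1,Y) | X0),
`h(x0,xt,xt1,y) = a(x0,xt,y)·b(xt,xt1,y)` (X0 ⟂ Xt1 | (Xt,Y)), and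
`g(x0,s) = c(s)·exp(r(x0;s)/τ)`, the (unnormalized) conditional density of `Xt`
given `(Xt1,Y,S) = (xt1,y,s)` is proportional to
`p(xt | xt1, y) · E[exp(r(X0;s)/τ) | Xt = xt, Y = y]`,
the proportionality constant depending only on `(xt1, y, s)`. -/
theorem stmt2 {d m k : ℕ}
    (p : EuclideanSpace ℝ (Fin d) → EuclideanSpace ℝ (Fin d) → EuclideanSpace ℝ (Fin d) →
      EuclideanSpace ℝ (Fin m) → EuclideanSpace ℝ (Fin k) → ℝ)
    (g : EuclideanSpace ℝ (Fin d) → EuclideanSpace ℝ (Fin k) → ℝ)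
    (h : EuclideanSpace ℝ (Fin d) → EuclideanSpace ℝ (Fin d) → EuclideanSpace ℝ (Fin d) →
      EuclideanSpace ℝ (Fin m) → ℝ)
    (a : EuclideanSpace ℝ (Fin d) → EuclideanSpace ℝ (Fin d) → EuclideanSpace ℝ (Fin m) → ℝ)
    (b : EuclideanSpace ℝ (Fin d) → EuclideanSpace ℝ (Fin d) → EuclideanSpace ℝ (Fin m) → ℝ)
    (c : EuclideanSpace ℝ (Fin k) → ℝ)
    (r : EuclideanSpace ℝ (Fin d) → EuclideanSpace ℝ (Fin k) → ℝ)
    (τ : ℝ) (hτ : 0 < τ)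
    (hpnn : ∀ x0 xt xt1 y s, 0 ≤ p x0 xt xt1 y s)
    (hhnn : ∀ x0 xt xt1 y, 0 ≤ h x0 xt xt1 y)
    (hfac : ∀ x0 xt xt1 y s, p x0 xt xt1 y s = g x0 s * h x0 xt xt1 y)
    (hg : ∀ x0 s, g x0 s = c s * Real.exp (r x0 s / τ))
    (hgnorm : ∀ x0, ∫ s, g x0 s = 1)
    (hcpos : ∀ s, 0 < c s)
    (hci : ∀ x0 xt xt1 y, h x0 xt xt1 y = a x0 xt y * b xt xt1 y)
    (xt1 : EuclideanSpace ℝ (Fin d)) (y : EuclideanSpace ℝ (Fin m))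
    (s : EuclideanSpace ℝ (Fin k))
    (hden : ∀ xt, 0 < ∫ x0, ∫ xt1', h x0 xt xt1' y)
    (hden1 : 0 < ∫ xt, ∫ x0, h x0 xt xt1 y) :
    ∃ C : ℝ, 0 < C ∧ ∀ xt : EuclideanSpace ℝ (Fin d),
      (∫ x0, p x0 xt xt1 y s)
        = C * ((∫ x0, h x0 xt xt1 y) / (∫ xt', ∫ x0, h x0 xt' xt1 y))
          * (∫ x0, Real.exp (r x0 s / τ) *
              ((∫ xt1', h x0 xt xt1' y) / (∫ x0', ∫ xt1', h x0' xt xt1' y))) :=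
  stmt2_general p g h a b c r τ hfac hg hcpos hci xt1 y s hden hden1
end

section
/- Under the same conditional independence structure, the marginal conditional density of X_t given (Y, S) satisfies p(x_t | y, s) ∝ p(x_t | y) · exp(V_t^τ(x_t; s, y)), where V_t^τ(x_t; s, y) = log E[exp(r(X0; s)/τ) | X_t = x_t, Y = y] and the proportionality constant depends only on (y, s). -/
open MeasureTheory

theorem stmt3_general {d m k : ℕ}
    (p : EuclideanSpace ℝ (Fin d) → EuclideanSpace ℝ (Fin d) →
      EuclideanSpace ℝ (Fin m) → EuclideanSpace ℝ (Fin k) → ℝ)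
    (g : EuclideanSpace ℝ (Fin d) → EuclideanSpace ℝ (Fin k) → ℝ)
    (h : EuclideanSpace ℝ (Fin d) → EuclideanSpace ℝ (Fin d) → EuclideanSpace ℝ (Fin m) → ℝ)
    (c : EuclideanSpace ℝ (Fin k) → ℝ)
    (r : EuclideanSpace ℝ (Fin d) → EuclideanSpace ℝ (Fin k) → ℝ)
    (τ : ℝ)
    (hfac : ∀ x0 xt y s, p x0 xt y s = g x0 s * h x0 xt y)
    (hg : ∀ x0 s, g x0 s = c s * Real.exp (r x0 s / τ))
    (hcpos : ∀ s, 0 < c s)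
    (y : EuclideanSpace ℝ (Fin m)) (s : EuclideanSpace ℝ (Fin k))
    (hden : ∀ xt, 0 < ∫ x0, h x0 xt y)
    (hdeny : 0 < ∫ xt, ∫ x0, h x0 xt y) :
    ∃ C : ℝ, 0 < C ∧ ∀ xt : EuclideanSpace ℝ (Fin d),
      (∫ x0, p x0 xt y s)
        = C * ((∫ x0, h x0 xt y) / (∫ xt', ∫ x0, h x0 xt' y))
          * (∫ x0, Real.exp (r x0 s / τ) * (h x0 xt y / (∫ x0', h x0' xt y))) := by
  refine ⟨c s * ∫ xt', ∫ x0, h x0 xt' y, mul_pos (hcpos s) hdeny, fun xt => ?_⟩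
  -- Both sides reduce to `c s * ∫ exp (r / τ) * h`; constants leave a Bochner integral
  -- with no integrability assumption.
  have hmarginal : ∫ x0, p x0 xt y s = c s * ∫ x0, Real.exp (r x0 s / τ) * h x0 xt y := by
    simp_rw [hfac, hg, mul_assoc]
    exact integral_const_mul _ _
  have hposterior : ∫ x0, Real.exp (r x0 s / τ) * (h x0 xt y / ∫ x0', h x0' xt y)
      = (∫ x0, Real.exp (r x0 s / τ) * h x0 xt y) / ∫ x0', h x0' xt y := by
    simp_rw [← mul_div_assoc]
    exact integral_div _ _
  rw [hmarginal, hposterior]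
  field_simp [(hden xt).ne', hdeny.ne']

/-- Reward-tilted marginal conditional density: with joint density
`p(x0,xt,y,s) = g(x0,s)·h(x0,xt,y)` (S ⟂ (Xt,Y) | X0) and
`g(x0,s) = c(s)·exp(r(x0;s)/τ)`, the (unnormalized) conditional density of `Xt`
given `(Y,S) = (y,s)` is proportional to `p(xt|y)·exp(V_t^τ(xt;s,y))`, i.e. to
`p(xt|y) · E[exp(r(X0;s)/τ) | Xt = xt, Y = y]`, the constant depending only on `(y,s)`. -/
theorem stmt3 {d m k : ℕ}
    (p : EuclideanSpace ℝ (Fin d) → EuclideanSpace ℝ (Fin d) →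
      EuclideanSpace ℝ (Fin m) → EuclideanSpace ℝ (Fin k) → ℝ)
    (g : EuclideanSpace ℝ (Fin d) → EuclideanSpace ℝ (Fin k) → ℝ)
    (h : EuclideanSpace ℝ (Fin d) → EuclideanSpace ℝ (Fin d) → EuclideanSpace ℝ (Fin m) → ℝ)
    (c : EuclideanSpace ℝ (Fin k) → ℝ)
    (r : EuclideanSpace ℝ (Fin d) → EuclideanSpace ℝ (Fin k) → ℝ)
    (τ : ℝ) (hτ : 0 < τ)
    (hpnn : ∀ x0 xt y s, 0 ≤ p x0 xt y s)
    (hhnn : ∀ x0 xt y, 0 ≤ h x0 xt y)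
    (hfac : ∀ x0 xt y s, p x0 xt y s = g x0 s * h x0 xt y)
    (hg : ∀ x0 s, g x0 s = c s * Real.exp (r x0 s / τ))
    (hgnorm : ∀ x0, ∫ s, g x0 s = 1)
    (hcpos : ∀ s, 0 < c s)
    (y : EuclideanSpace ℝ (Fin m)) (s : EuclideanSpace ℝ (Fin k))
    (hden : ∀ xt, 0 < ∫ x0, h x0 xt y)
    (hdeny : 0 < ∫ xt, ∫ x0, h x0 xt y) :
    ∃ C : ℝ, 0 < C ∧ ∀ xt : EuclideanSpace ℝ (Fin d),
      (∫ x0, p x0 xt y s)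
        = C * ((∫ x0, h x0 xt y) / (∫ xt', ∫ x0, h x0 xt' y))
          * (∫ x0, Real.exp (r x0 s / τ) * (h x0 xt y / (∫ x0', h x0' xt y))) :=
  stmt3_general p g h c r τ hfac hg hcpos y s hden hdeny
end

section
/- Let X0, X_t, Y have a joint density with Y conditionally independent of X_t given X0, with the Gaussian forward model X_t = √α X0 + √(1−α)Z, Z ∼ N(0,I) independent. Then the conditional mean of X0 given (X_t, Y) satisfies x̂_{0|t,Y}(x_t, y) = x̂_{0|t}(x_t) + ((1−α)/√α)·∇_{x_t} log p(y | x_t), where x̂_{0|t}(x_t) = E[X0 | X_t = x_t] and p(y | x_t) = E[p(y | X0) | X_t = x_t]. -/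
/-!
Tweedie: for the Gaussian kernel `exp (-‖x_t - a x‖² / (2v))`, differentiating under the integral
gives `∇P(x_t) = v⁻¹ ∫ w(x) (a x - x_t) dx` for `P = ∫ w`, i.e.
`a · (posterior mean) = x_t + v ∇ log P(x_t)`. Applied to the prior weight (`P = p_t`) and to the
likelihood-tilted weight (`P = p_t(· | y)`), the two posterior means differ by
`(v / a) (∇ log p_t(· | y) - ∇ log p_t)`, and by Bayes' rule the bracket is `∇ log p(y | x_t)`.
-/

open MeasureTheory

section Gradient

variable {F : Type*} [NormedAddCommGroup F] [InnerProductSpace ℝ F] [CompleteSpace F]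
  {f g : F → ℝ} {f' g' x : F}

theorem HasGradientAt.sub (hf : HasGradientAt f f' x) (hg : HasGradientAt g g' x) :
    HasGradientAt (fun y => f y - g y) (f' - g') x := by
  rw [hasGradientAt_iff_hasFDerivAt, map_sub]
  exact hf.hasFDerivAt.sub hg.hasFDerivAt

theorem HasGradientAt.log (hf : HasGradientAt f f' x) (hx : f x ≠ 0) :
    HasGradientAt (fun y => Real.log (f y)) ((f x)⁻¹ • f') x := by
  rw [hasGradientAt_iff_hasFDerivAt, map_smul]
  exact hf.hasFDerivAt.log hx

theorem gradient_log_div (hf : DifferentiableAt ℝ f x) (hg : DifferentiableAt ℝ g x)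
    (hfx : f x ≠ 0) (hgx : g x ≠ 0) :
    gradient (fun y => Real.log (f y / g y)) x
      = gradient (fun y => Real.log (f y)) x - gradient (fun y => Real.log (g y)) x := by
  have hlog_div : (fun y => Real.log (f y / g y)) =ᶠ[nhds x]
      fun y => Real.log (f y) - Real.log (g y) := by
    filter_upwards [hf.continuousAt.eventually_ne hfx, hg.continuousAt.eventually_ne hgx]
      with y hfy hgy
    exact Real.log_div hfy hgy
  have hlog_f := hf.hasGradientAt.log hfx
  have hlog_g := hg.hasGradientAt.log hgx
  rw [hlog_div.gradient_eq, (hlog_f.sub hlog_g).gradient, hlog_f.gradient, hlog_g.gradient]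

end Gradient

section Tweedie

variable {E : Type*} [NormedAddCommGroup E] [MeasurableSpace E] {μ : Measure E}

theorem integral_mul_smul_smul_sub [NormedSpace ℝ E] [CompleteSpace E] (c a : ℝ) (y : E)
    {w : E → ℝ} (hw : Integrable w μ) (hwx : Integrable (fun x => w x • x) μ) :
    ∫ x, (c * w x) • (a • x - y) ∂μ = c • (a • ∫ x, w x • x ∂μ - (∫ x, w x ∂μ) • y) := by
  have hexpand : ∀ x, (c * w x) • (a • x - y) = c • (a • (w x • x) - w x • y) := fun x => by
    module
  simp_rw [hexpand]
  rw [integral_smul, integral_sub (f := fun x => a • (w x • x)) (hwx.smul a) (hw.smul_const y),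
    integral_smul, integral_smul_const]

theorem tweedie_formula [InnerProductSpace ℝ E] [CompleteSpace E] {P w : E → ℝ} {a v : ℝ} {y : E}
    (ha : a ≠ 0) (hv : v ≠ 0) (hP : P y = ∫ x, w x ∂μ) (hPy : P y ≠ 0)
    (hwx : Integrable (fun x => w x • x) μ)
    (hgrad : HasGradientAt P (∫ x, (v⁻¹ * w x) • (a • x - y) ∂μ) y) :
    (P y)⁻¹ • ∫ x, w x • x ∂μ = a⁻¹ • (y + v • gradient (fun z => Real.log (P z)) y) := by
  have hw : Integrable w μ := .of_integral_ne_zero (hP ▸ hPy)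
  rw [(hgrad.log hPy).gradient, integral_mul_smul_smul_sub _ _ _ hw hwx, ← hP]
  match_scalars <;> field_simp; ring

end Tweedie

theorem stmt8_general {d : ℕ}
    (p0 ℓ : EuclideanSpace ℝ (Fin d) → ℝ) (α : ℝ) (hα : α ∈ Set.Ioo (0:ℝ) 1)
    (gauss : EuclideanSpace ℝ (Fin d) → EuclideanSpace ℝ (Fin d) → ℝ)
    (pt ptY : EuclideanSpace ℝ (Fin d) → ℝ)
    (hpt : ∀ xt, pt xt = ∫ x0, p0 x0 * gauss xt x0)
    (hptY : ∀ xt, ptY xt = ∫ x0, ℓ x0 * p0 x0 * gauss xt x0)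
    (hint : ∀ xt, Integrable (fun x0 => (p0 x0 * gauss xt x0) • x0))
    (hintY : ∀ xt, Integrable (fun x0 => (ℓ x0 * p0 x0 * gauss xt x0) • x0))
    (hgrad : ∀ xt, HasGradientAt pt
      (∫ x0, ((1 - α)⁻¹ * (p0 x0 * gauss xt x0)) • (Real.sqrt α • x0 - xt)) xt)
    (hgradY : ∀ xt, HasGradientAt ptY
      (∫ x0, ((1 - α)⁻¹ * (ℓ x0 * p0 x0 * gauss xt x0)) • (Real.sqrt α • x0 - xt)) xt)
    (xt : EuclideanSpace ℝ (Fin d)) (hpos : 0 < pt xt) (hposY : 0 < ptY xt) :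
    (ptY xt)⁻¹ • (∫ x0, (ℓ x0 * p0 x0 * gauss xt x0) • x0)
      = (pt xt)⁻¹ • (∫ x0, (p0 x0 * gauss xt x0) • x0)
        + ((1 - α) / Real.sqrt α) •
            gradient (fun x => Real.log (ptY x / pt x)) xt := by
  have hsqrt : Real.sqrt α ≠ 0 := (Real.sqrt_pos.2 hα.1).ne'
  have hvar : 1 - α ≠ 0 := sub_ne_zero.2 hα.2.ne'
  rw [tweedie_formula hsqrt hvar (hptY xt) hposY.ne' (hintY xt) (hgradY xt),
    tweedie_formula hsqrt hvar (hpt xt) hpos.ne' (hint xt) (hgrad xt),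
    gradient_log_div (hgradY xt).differentiableAt (hgrad xt).differentiableAt hposY.ne' hpos.ne']
  module

/-- With `Y ⟂ X_t | X0` and the Gaussian forward model `X_t = √α X0 + √(1−α)Z`,
the conditional mean satisfies
`x̂_{0|t,Y}(x_t,y) = x̂_{0|t}(x_t) + ((1−α)/√α)·∇_{x_t} log p(y | x_t)`,
where `p(y|x_t) = E[p(y|X0) | X_t = x_t] = ptY(x_t)/pt(x_t)`. Differentiation under the
integral sign is assumed through `hgrad` and `hgradY`. -/
theorem stmt8 {d : ℕ}
    (p0 ℓ : EuclideanSpace ℝ (Fin d) → ℝ) (α : ℝ) (hα : α ∈ Set.Ioo (0:ℝ) 1)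
    (hp0 : ∀ x, 0 ≤ p0 x) (hp0meas : Measurable p0) (hp0int : ∫ x, p0 x = 1)
    (hℓnn : ∀ x, 0 ≤ ℓ x) (hℓmeas : Measurable ℓ)
    (gauss : EuclideanSpace ℝ (Fin d) → EuclideanSpace ℝ (Fin d) → ℝ)
    (hgauss : ∀ xt x0, gauss xt x0
      = (2 * Real.pi * (1 - α)) ^ (-(d : ℝ) / 2)
        * Real.exp (-‖xt - Real.sqrt α • x0‖ ^ 2 / (2 * (1 - α))))
    (pt ptY : EuclideanSpace ℝ (Fin d) → ℝ)
    (hpt : ∀ xt, pt xt = ∫ x0, p0 x0 * gauss xt x0)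
    (hptY : ∀ xt, ptY xt = ∫ x0, ℓ x0 * p0 x0 * gauss xt x0)
    (hint : ∀ xt, Integrable (fun x0 => (p0 x0 * gauss xt x0) • x0))
    (hintY : ∀ xt, Integrable (fun x0 => (ℓ x0 * p0 x0 * gauss xt x0) • x0))
    (hgrad : ∀ xt, HasGradientAt pt
      (∫ x0, ((1 - α)⁻¹ * (p0 x0 * gauss xt x0)) • (Real.sqrt α • x0 - xt)) xt)
    (hgradY : ∀ xt, HasGradientAt ptY
      (∫ x0, ((1 - α)⁻¹ * (ℓ x0 * p0 x0 * gauss xt x0)) • (Real.sqrt α • x0 - xt)) xt)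
    (xt : EuclideanSpace ℝ (Fin d)) (hpos : 0 < pt xt) (hposY : 0 < ptY xt) :
    (ptY xt)⁻¹ • (∫ x0, (ℓ x0 * p0 x0 * gauss xt x0) • x0)
      = (pt xt)⁻¹ • (∫ x0, (p0 x0 * gauss xt x0) • x0)
        + ((1 - α) / Real.sqrt α) •
            gradient (fun x => Real.log (ptY x / pt x)) xt :=
  stmt8_general p0 ℓ α hα gauss pt ptY hpt hptY hint hintY hgrad hgradY xt hpos hposY
end

section
/- Let W be a random variable with values in [0,1], τ > 0, and let c_τ = e^{1/τ} − 1 − 1/τ. Then log E[exp(W/τ)] ≤ (1/τ)·E[W] + c_τ·Var(W). -/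
/-!
Bennett's pointwise bound `exp (s x) ≤ 1 + s x + x² (exp s - 1 - s)` for `x ≤ 1`, `s ≥ 0`, applied
to `x = W - E[W]` and integrated, gives `E[exp (s (W - E[W]))] ≤ 1 + c Var W`; taking logarithms
and using `log (1 + u) ≤ u` yields the bound on the cumulant generating function at `s = 1/τ`.
-/

open MeasureTheory ProbabilityTheory Real

lemma nonneg_of_hasDerivAt_nonneg {f f' : ℝ → ℝ} (hf : ∀ s, HasDerivAt f (f' s) s)
    (hf₀ : f 0 = 0) (hf' : ∀ s, 0 ≤ s → 0 ≤ f' s) {s : ℝ} (hs : 0 ≤ s) : 0 ≤ f s := by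
  have hmono : MonotoneOn f (Set.Ici 0) :=
    monotoneOn_of_hasDerivWithinAt_nonneg (convex_Ici 0)
      (fun x _ ↦ (hf x).continuousAt.continuousWithinAt) (fun x _ ↦ (hf x).hasDerivWithinAt)
      (fun x hx ↦ hf' x (interior_subset hx))
  simpa [hf₀] using hmono Set.self_mem_Ici hs hs

lemma exp_mul_le_bennett {s x : ℝ} (hs : 0 ≤ s) (hx : x ≤ 1) :
    exp (s * x) ≤ 1 + s * x + x ^ 2 * (exp s - 1 - s) := by
  suffices 0 ≤ x ^ 2 * (exp s - 1 - s) - (exp (s * x) - 1 - s * x) by linarith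
  -- as a function of `s`, the gap and its derivative vanish at `0` and it is convex for `s ≥ 0`
  have hderiv (t : ℝ) : HasDerivAt (fun t ↦ x ^ 2 * (exp t - 1 - t) - (exp (t * x) - 1 - t * x))
      (x ^ 2 * (exp t - 1) - x * (exp (t * x) - 1)) t :=
    ((((hasDerivAt_exp t).sub_const 1).sub (hasDerivAt_id t)).const_mul (x ^ 2) |>.sub
      ((((hasDerivAt_mul_const x).exp).sub_const 1).sub (hasDerivAt_mul_const x))).congr_deriv
      (by ring)
  have hderiv' (t : ℝ) : HasDerivAt (fun t ↦ x ^ 2 * (exp t - 1) - x * (exp (t * x) - 1))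
      (x ^ 2 * (exp t - exp (t * x))) t :=
    (((hasDerivAt_exp t).sub_const 1).const_mul (x ^ 2) |>.sub
      (((hasDerivAt_mul_const x).exp).sub_const 1 |>.const_mul x)).congr_deriv (by ring)
  refine nonneg_of_hasDerivAt_nonneg hderiv (by simp) (fun t ht ↦ ?_) hs
  refine nonneg_of_hasDerivAt_nonneg hderiv' (by simp) (fun u hu ↦ ?_) ht
  have : exp (u * x) ≤ exp u := exp_le_exp.mpr (by nlinarith)
  positivity

section

variable {Ω : Type*} [MeasurableSpace Ω] {μ : Measure Ω} [IsProbabilityMeasure μ] {X : Ω → ℝ}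
  {s : ℝ}

lemma mgf_sub_integral_le (hX : MemLp X 2 μ) (hXle : ∀ᵐ ω ∂μ, X ω - μ[X] ≤ 1) (hs : 0 ≤ s) :
    mgf (fun ω ↦ X ω - μ[X]) μ s ≤ 1 + (exp s - 1 - s) * Var[X; μ] := by
  have hY : AEMeasurable (fun ω ↦ X ω - μ[X]) μ := hX.aemeasurable.sub_const _
  have hX_int : Integrable X μ := hX.integrable one_le_two
  have hY_sq : Integrable (fun ω ↦ (X ω - μ[X]) ^ 2) μ := (hX.sub (memLp_const _)).integrable_sq
  have hY_int : Integrable (fun ω ↦ X ω - μ[X]) μ := hX_int.sub (integrable_const _)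
  have hlin : Integrable (fun ω ↦ 1 + s * (X ω - μ[X])) μ :=
    (integrable_const 1).add (hY_int.const_mul s)
  calc mgf (fun ω ↦ X ω - μ[X]) μ s
      ≤ ∫ ω, (1 + s * (X ω - μ[X]) + (X ω - μ[X]) ^ 2 * (exp s - 1 - s)) ∂μ := by
        refine integral_mono_ae (integrable_exp_mul_of_le s 1 hs hY hXle)
          (hlin.add (hY_sq.mul_const _)) ?_
        filter_upwards [hXle] with ω hω using exp_mul_le_bennett hs hω
    _ = 1 + (exp s - 1 - s) * Var[X; μ] := by
        rw [integral_add hlin (hY_sq.mul_const _),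
          integral_add (integrable_const 1) (hY_int.const_mul s),
          integral_const_mul, integral_mul_const, integral_sub hX_int (integrable_const _),
          variance_eq_integral hX.aemeasurable]
        simp only [integral_const, probReal_univ, smul_eq_mul, one_mul, sub_self, mul_zero,
          add_zero]
        ring

theorem cgf_le_bennett (hX : MemLp X 2 μ) (hXle : ∀ᵐ ω ∂μ, X ω - μ[X] ≤ 1) (hs : 0 ≤ s) :
    cgf X μ s ≤ s * μ[X] + (exp s - 1 - s) * Var[X; μ] := by
  have hmgf : mgf X μ s = mgf (fun ω ↦ X ω - μ[X]) μ s * exp (s * μ[X]) := by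
    simpa using mgf_add_const (X := fun ω ↦ X ω - μ[X]) (μ := μ) (t := s) μ[X]
  have hpos : 0 < mgf (fun ω ↦ X ω - μ[X]) μ s :=
    mgf_pos (integrable_exp_mul_of_le s 1 hs (hX.aemeasurable.sub_const _) hXle)
  calc cgf X μ s = log (mgf (fun ω ↦ X ω - μ[X]) μ s) + s * μ[X] := by
        rw [cgf, hmgf, log_mul hpos.ne' (exp_pos _).ne', log_exp]
    _ ≤ (exp s - 1 - s) * Var[X; μ] + s * μ[X] := by
        gcongr
        linarith [log_le_sub_one_of_pos hpos, mgf_sub_integral_le hX hXle hs]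
    _ = _ := add_comm _ _

end

/-- Bennett-type bound on the log-MGF of a `[0,1]`-valued random variable:
`log E[exp(W/τ)] ≤ (1/τ)·E[W] + c_τ·Var(W)` with `c_τ = e^{1/τ} − 1 − 1/τ`. -/
theorem stmt9 {Ω : Type*} [MeasurableSpace Ω]
    (μ : Measure Ω) [IsProbabilityMeasure μ]
    (W : Ω → ℝ) (hWmeas : Measurable W)
    (hW : ∀ ω, W ω ∈ Set.Icc (0:ℝ) 1)
    (τ : ℝ) (hτ : 0 < τ) :
    Real.log (∫ ω, Real.exp (W ω / τ) ∂μ)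
      ≤ (1 / τ) * (∫ ω, W ω ∂μ)
        + (Real.exp (1 / τ) - 1 - 1 / τ) * variance W μ := by
  have hW2 : MemLp W 2 μ := memLp_of_bounded (ae_of_all _ hW) hWmeas.aestronglyMeasurable 2
  have hmean : 0 ≤ μ[W] := integral_nonneg fun ω ↦ (hW ω).1
  have h := cgf_le_bennett hW2 (ae_of_all _ fun ω ↦ by linarith [(hW ω).2]) (one_div_pos.mpr hτ).le
  simpa only [cgf, mgf, one_div_mul_eq_div] using h
end

section
/- (Value approximation bound) Let r : ℝ^d × 𝒮 → [0,1] be L_r-Lipschitz in its first argument, τ > 0, and c_τ = e^{1/τ} − 1 − 1/τ. Under the conditional independence assumptions above, with V = log E[exp(r(X0; s)/τ) | X_t = x_t, Y = y] and V̂ = r(x̃^η; s)/τ where x̃^η = x̂_{0|t}(x_t) + η Σ_{0|t}(x_t) A^T(y − A x̂_{0|t}(x_t)), we have |V − V̂| ≤ c_τ·Var(r(X0;s) | x_t, y) + (L_r/τ)·(√(Var(X0 | x_t, y)) + √(Var(X0 | x_t))·√(c_4^η)), where c_4^η = 1 + CV² + η²‖A^T(y − Ax̂_{0|t})‖²_{Σ_{0|t}}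 − 2η⟨A(x̂_{0|t,Y} − x̂_{0|t}), y − A x̂_{0|t}⟩. -/
/-!
Split `|V - V̂|` through `E_{ν1}[r]/τ` and `r(x̂_{0|t,Y})/τ`. The first gap is Bennett's bound:
integrating `eˣ ≤ 1 + x + ((eᵇ - 1 - b)/b²) x²` (valid for `x ≤ b`) over a variable centred at its
mean gives `log E e^f - E f ≤ ((eᵇ - 1 - b)/b²) Var f`, and Jensen gives the lower bound `0`.
The second gap is Lipschitz continuity plus Cauchy–Schwarz. For the third, the posterior is the
prior tilted by the normalised likelihood `f = P / E P`, so with `u = X0 - x̂_{0|t}` and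
`φ = ⟪u, w⟫` we get `x̂_{0|t,Y} - x̃^η = E_{ν2}[(f - 1 - η φ) u]`; Cauchy–Schwarz bounds its
norm by `√Var(X0|x_t)` times the `L²` norm of `f - 1 - η φ`, whose square is `c₄ - 1`.
-/

open MeasureTheory ProbabilityTheory

open Real
open scoped InnerProductSpace

theorem sq_mul_exp_sub_one_sub_le {x b : ℝ} (hx : 0 ≤ x) (hxb : x ≤ b) :
    b ^ 2 * (exp x - 1 - x) ≤ x ^ 2 * (exp b - 1 - b) := by
  -- compare the exponential series term by term from degree 2 on
  have tail : ∀ t : ℝ, HasSum (fun n : ℕ => t ^ (n + 2) / (n + 2).factorial) (exp t - 1 - t) := by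
    intro t
    have h := NormedSpace.expSeries_div_hasSum_exp t
    rw [← Real.exp_eq_exp_ℝ, ← hasSum_nat_add_iff' 2] at h
    simpa [Finset.sum_range_succ, sub_sub] using h
  refine hasSum_le (fun n => ?_) ((tail x).mul_left _) ((tail b).mul_left _)
  rw [mul_div_assoc', mul_div_assoc']
  refine div_le_div_of_nonneg_right ?_ (by positivity)
  calc b ^ 2 * x ^ (n + 2) = x ^ 2 * b ^ 2 * x ^ n := by ring
    _ ≤ x ^ 2 * b ^ 2 * b ^ n := by gcongr
    _ = x ^ 2 * b ^ (n + 2) := by ring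

theorem exp_le_one_add_add_sq_div_two {x : ℝ} (hx : x ≤ 0) : exp x ≤ 1 + x + x ^ 2 / 2 := by
  -- `e⁻ˣ` dominates its cubic Taylor polynomial, whose product with `1 + x + x²/2` is `≥ 1`
  have hy : 0 ≤ -x := neg_nonneg.mpr hx
  have cubic : 1 - x + x ^ 2 / 2 - x ^ 3 / 6 ≤ exp (-x) := by
    have h := sum_le_exp_of_nonneg hy 4
    norm_num [Finset.sum_range_succ, Nat.factorial] at h
    linarith
  have hc : 0 < 1 - x + x ^ 2 / 2 - x ^ 3 / 6 := by
    nlinarith [pow_nonneg hy 3, sq_nonneg x]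
  have hprod : 1 ≤ (1 + x + x ^ 2 / 2) * (1 - x + x ^ 2 / 2 - x ^ 3 / 6) := by
    have h3 := pow_nonneg hy 3
    nlinarith [mul_nonneg h3 hy, mul_nonneg h3 (sq_nonneg x)]
  have hexp : exp x * (1 - x + x ^ 2 / 2 - x ^ 3 / 6) ≤ 1 := by
    calc _ ≤ exp x * exp (-x) := by gcongr
      _ = 1 := by rw [← exp_add, add_neg_cancel, exp_zero]
  by_contra! h
  nlinarith [mul_lt_mul_of_pos_right h hc]

theorem exp_le_one_add_add_mul_sq {x b : ℝ} (hb : 0 < b) (hxb : x ≤ b) :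
    exp x ≤ 1 + x + (exp b - 1 - b) / b ^ 2 * x ^ 2 := by
  rcases le_or_gt x 0 with hx | hx
  · have half_le : 1 / 2 ≤ (exp b - 1 - b) / b ^ 2 := by
      rw [le_div_iff₀ (by positivity)]
      linarith [quadratic_le_exp_of_nonneg hb.le]
    nlinarith [exp_le_one_add_add_sq_div_two hx, sq_nonneg x]
  · have h := sq_mul_exp_sub_one_sub_le hx.le hxb
    have h' : exp x - 1 - x ≤ (exp b - 1 - b) / b ^ 2 * x ^ 2 := by
      rw [div_mul_eq_mul_div, le_div_iff₀ (by positivity)]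
      linarith
    linarith

section

variable {α : Type*} [MeasurableSpace α] {μ : Measure α}

theorem integral_mul_le_sqrt_mul_sqrt {f g : α → ℝ} (hf0 : 0 ≤ᵐ[μ] f) (hg0 : 0 ≤ᵐ[μ] g)
    (hf : MemLp f 2 μ) (hg : MemLp g 2 μ) :
    ∫ x, f x * g x ∂μ ≤ √(∫ x, f x ^ 2 ∂μ) * √(∫ x, g x ^ 2 ∂μ) := by
  have h := integral_mul_le_Lp_mul_Lq_of_nonneg Real.HolderConjugate.two_two hf0 hg0
    (by simpa using hf) (by simpa using hg)
  rw [sqrt_eq_rpow, sqrt_eq_rpow]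
  simpa using h

theorem norm_integral_smul_le_sqrt_mul_sqrt {E : Type*} [NormedAddCommGroup E] [NormedSpace ℝ E]
    {g : α → ℝ} {u : α → E} (hg : MemLp g 2 μ) (hu : MemLp u 2 μ) :
    ‖∫ x, g x • u x ∂μ‖ ≤ √(∫ x, g x ^ 2 ∂μ) * √(∫ x, ‖u x‖ ^ 2 ∂μ) :=
  calc ‖∫ x, g x • u x ∂μ‖ ≤ ∫ x, |g x| * ‖u x‖ ∂μ := by
        simpa only [norm_smul, Real.norm_eq_abs] using
          norm_integral_le_integral_norm (fun x => g x • u x)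
    _ ≤ √(∫ x, |g x| ^ 2 ∂μ) * √(∫ x, ‖u x‖ ^ 2 ∂μ) :=
        integral_mul_le_sqrt_mul_sqrt (ae_of_all _ fun _ => abs_nonneg _)
          (ae_of_all _ fun _ => norm_nonneg _) hg.abs hu.norm
    _ = √(∫ x, g x ^ 2 ∂μ) * √(∫ x, ‖u x‖ ^ 2 ∂μ) := by simp only [sq_abs]

theorem abs_log_integral_exp_sub_integral_le [IsProbabilityMeasure μ] {f : α → ℝ} {b : ℝ}
    (hb : 0 < b) (hf : MemLp f 2 μ) (hfb : ∀ᵐ x ∂μ, f x - ∫ y, f y ∂μ ≤ b) :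
    |log (∫ x, exp (f x) ∂μ) - ∫ x, f x ∂μ| ≤ (exp b - 1 - b) / b ^ 2 * Var[f; μ] := by
  set m := ∫ x, f x ∂μ
  set c := (exp b - 1 - b) / b ^ 2
  have hfi : Integrable f μ := hf.integrable one_le_two
  have hdev : Integrable (fun x => f x - m) μ := hfi.sub (integrable_const m)
  have hdev_mean : ∫ x, (f x - m) ∂μ = 0 := by simp [integral_sub hfi (integrable_const m), m]
  have hdev_sq : Integrable (fun x => c * (f x - m) ^ 2) μ :=
    ((hf.sub (memLp_const m)).integrable_sq).const_mul c
  have hexp : Integrable (fun x => exp (f x - m)) μ := by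
    refine Integrable.mono' (integrable_const (exp b))
      (continuous_exp.comp_aestronglyMeasurable hdev.1) ?_
    filter_upwards [hfb] with x hx
    rw [norm_of_nonneg (exp_pos _).le]
    exact exp_le_exp.mpr hx
  have hlin : Integrable (fun x => 1 + (f x - m)) μ := (integrable_const 1).add hdev
  have hlin_int : ∫ x, (1 + (f x - m)) ∂μ = 1 := by
    simp [integral_add (integrable_const 1) hdev, hdev_mean]
  set Z := ∫ x, exp (f x - m) ∂μ
  have one_le_Z : 1 ≤ Z := hlin_int ▸
    integral_mono hlin hexp fun x => by linarith [add_one_le_exp (f x - m)]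
  have Z_le : Z ≤ 1 + c * Var[f; μ] := by
    calc Z ≤ ∫ x, (1 + (f x - m) + c * (f x - m) ^ 2) ∂μ := by
          refine integral_mono_ae hexp (hlin.add hdev_sq) ?_
          filter_upwards [hfb] with x hx using exp_le_one_add_add_mul_sq hb hx
      _ = 1 + c * Var[f; μ] := by
          rw [integral_add hlin hdev_sq, hlin_int, integral_const_mul,
            variance_eq_integral hf.1.aemeasurable]
  have hlog : log (∫ x, exp (f x) ∂μ) = m + log Z := by
    have hfactor : ∫ x, exp (f x) ∂μ = exp m * Z := by
      rw [← integral_const_mul]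
      congr with x
      rw [← exp_add, add_sub_cancel]
    rw [hfactor, log_mul (exp_ne_zero m) (by positivity), log_exp]
  rw [hlog, add_sub_cancel_left, abs_of_nonneg (log_nonneg one_le_Z)]
  linarith [log_le_sub_one_of_pos (by positivity : 0 < Z)]

theorem abs_log_integral_exp_div_sub_le [IsProbabilityMeasure μ] {g : α → ℝ}
    (hg : AEStronglyMeasurable g μ) (hg01 : ∀ x, g x ∈ Set.Icc (0 : ℝ) 1) {τ : ℝ} (hτ : 0 < τ) :
    |log (∫ x, exp (g x / τ) ∂μ) - (∫ x, g x ∂μ) / τ|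
      ≤ (exp (1 / τ) - 1 - 1 / τ) * Var[g; μ] := by
  have hf01 : ∀ x, g x / τ ∈ Set.Icc 0 (1 / τ) := fun x =>
    ⟨div_nonneg (hg01 x).1 hτ.le, div_le_div_of_nonneg_right (hg01 x).2 hτ.le⟩
  have hf : MemLp (fun x => g x / τ) 2 μ :=
    memLp_of_bounded (ae_of_all _ hf01) (hg.mul_const τ⁻¹) 2
  have hmean_nonneg : 0 ≤ ∫ y, g y / τ ∂μ := integral_nonneg fun y => (hf01 y).1
  have hfb : ∀ᵐ x ∂μ, g x / τ - ∫ y, g y / τ ∂μ ≤ 1 / τ :=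
    ae_of_all _ fun x => by linarith [(hf01 x).2]
  have h := abs_log_integral_exp_sub_integral_le (one_div_pos.mpr hτ) hf hfb
  have hvar : Var[fun x => g x / τ; μ] = (1 / τ) ^ 2 * Var[g; μ] := by
    rw [← variance_const_mul]
    congr with x
    ring
  rwa [integral_div, hvar, ← mul_assoc, div_mul_cancel₀ _ (by positivity)] at h

theorem abs_integral_sub_apply_integral_le {E : Type*} [NormedAddCommGroup E] [NormedSpace ℝ E]
    [MeasurableSpace E] {μ : Measure E} [IsProbabilityMeasure μ] {F : E → ℝ} {L : ℝ}
    (hL : 0 ≤ L) (hF : ∀ x x', |F x - F x'| ≤ L * ‖x - x'‖) (hFm : AEStronglyMeasurable F μ)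
    (hX : Integrable (fun x => x) μ) (hX2 : Integrable (fun x => ‖x - ∫ y, y ∂μ‖ ^ 2) μ) :
    |∫ x, F x ∂μ - F (∫ x, x ∂μ)| ≤ L * √(∫ x, ‖x - ∫ y, y ∂μ‖ ^ 2 ∂μ) := by
  set m := ∫ x, x ∂μ
  have hdist : Integrable (fun x => ‖x - m‖) μ := (hX.sub (integrable_const m)).norm
  have hdiff : Integrable (fun x => F x - F m) μ :=
    hdist.const_mul L |>.mono' (hFm.sub aestronglyMeasurable_const) (ae_of_all _ fun x => hF x m)
  have hmean_dist : ∫ x, ‖x - m‖ ∂μ ≤ √(∫ x, ‖x - m‖ ^ 2 ∂μ) := by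
    have hmem : MemLp (fun x => ‖x - m‖) 2 μ :=
      (memLp_two_iff_integrable_sq hdist.1).2 hX2
    simpa using integral_mul_le_sqrt_mul_sqrt (ae_of_all _ fun x => norm_nonneg (x - m))
      (ae_of_all _ fun _ => zero_le_one) hmem (memLp_const (1 : ℝ))
  have hFi : Integrable F μ :=
    (hdiff.add (integrable_const (F m))).congr (ae_of_all _ fun x => sub_add_cancel (F x) (F m))
  calc |∫ x, F x ∂μ - F m| = |∫ x, (F x - F m) ∂μ| := by
        rw [integral_sub hFi (integrable_const _)]
        simp
    _ ≤ ∫ x, L * ‖x - m‖ ∂μ := by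
        simpa only [← Real.norm_eq_abs] using
          norm_integral_le_of_norm_le (hdist.const_mul L) (ae_of_all _ fun x => hF x m)
    _ ≤ L * √(∫ x, ‖x - m‖ ^ 2 ∂μ) := by
        rw [integral_const_mul]
        exact mul_le_mul_of_nonneg_left hmean_dist hL

theorem integral_sub_one_sub_mul_sq [IsProbabilityMeasure μ] {f φ : α → ℝ} (hf : MemLp f 2 μ)
    (hφ : MemLp φ 2 μ) (hf1 : ∫ x, f x ∂μ = 1) (hφ0 : ∫ x, φ x ∂μ = 0) (η : ℝ) :
    ∫ x, (f x - 1 - η * φ x) ^ 2 ∂μ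
      = ∫ x, f x ^ 2 ∂μ - 1 + η ^ 2 * ∫ x, φ x ^ 2 ∂μ - 2 * η * ∫ x, f x * φ x ∂μ := by
  have i₁ : Integrable (fun x => f x ^ 2) μ := hf.integrable_sq
  have i₂ : Integrable (fun x => η ^ 2 * φ x ^ 2) μ := hφ.integrable_sq.const_mul _
  have i₃ : Integrable (fun x => 2 * η * (f x * φ x)) μ :=
    ((hφ.mul' hf).integrable le_rfl).const_mul _
  have i₄ : Integrable (fun x => 2 * f x) μ := (hf.integrable one_le_two).const_mul _
  have i₅ : Integrable (fun x => 2 * η * φ x) μ := (hφ.integrable one_le_two).const_mul _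
  have i₁₂ : Integrable (fun x => f x ^ 2 + η ^ 2 * φ x ^ 2) μ := i₁.add i₂
  have i₁₃ : Integrable (fun x => f x ^ 2 + η ^ 2 * φ x ^ 2 - 2 * η * (f x * φ x)) μ := i₁₂.sub i₃
  have i₁₄ : Integrable
      (fun x => f x ^ 2 + η ^ 2 * φ x ^ 2 - 2 * η * (f x * φ x) - 2 * f x) μ := i₁₃.sub i₄
  have hexpand : ∀ x, (f x - 1 - η * φ x) ^ 2
      = f x ^ 2 + η ^ 2 * φ x ^ 2 - 2 * η * (f x * φ x) - 2 * f x + 2 * η * φ x + 1 := by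
    intro x; ring
  simp_rw [hexpand]
  rw [integral_add ?_ (integrable_const 1), integral_add i₁₄ i₅, integral_sub i₁₃ i₄,
    integral_sub i₁₂ i₃, integral_add i₁ i₂]
  · simp only [integral_const_mul, hf1, hφ0, integral_const, probReal_univ, smul_eq_mul]
    ring
  · exact i₁₄.add i₅

theorem norm_integral_smul_sub_smul_integral_smul_le [IsProbabilityMeasure μ] {E : Type*}
    [NormedAddCommGroup E] [NormedSpace ℝ E] {f φ : α → ℝ} {u : α → E}
    (hf : MemLp f 2 μ) (hφ : MemLp φ 2 μ) (hu : MemLp u 2 μ)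
    (hf1 : ∫ x, f x ∂μ = 1) (hφ0 : ∫ x, φ x ∂μ = 0) (hu0 : ∫ x, u x ∂μ = 0) (η : ℝ) :
    ‖∫ x, f x • u x ∂μ - η • ∫ x, φ x • u x ∂μ‖
      ≤ √(∫ x, f x ^ 2 ∂μ - 1 + η ^ 2 * ∫ x, φ x ^ 2 ∂μ - 2 * η * ∫ x, f x * φ x ∂μ)
        * √(∫ x, ‖u x‖ ^ 2 ∂μ) := by
  have hg : MemLp (fun x => f x - 1 - η * φ x) 2 μ :=
    (hf.sub (memLp_const 1)).sub (hφ.const_mul η)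
  have hfu : Integrable (fun x => f x • u x) μ := (hu.smul hf).integrable le_rfl
  have hφu : Integrable (fun x => η • (φ x • u x)) μ := ((hu.smul hφ).integrable le_rfl).smul η
  have hu1 : Integrable u μ := hu.integrable one_le_two
  have hcentered : ∫ x, f x • u x ∂μ - η • ∫ x, φ x • u x ∂μ
      = ∫ x, (f x - 1 - η * φ x) • u x ∂μ := by
    simp_rw [sub_smul, one_smul, mul_smul]
    rw [integral_sub ?_ hφu, integral_sub hfu hu1, hu0, sub_zero, integral_smul]
    exact hfu.sub hu1
  rw [hcentered, ← integral_sub_one_sub_mul_sq hf hφ hf1 hφ0]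
  exact norm_integral_smul_le_sqrt_mul_sqrt hg hu

theorem integral_div_integral_sq [IsProbabilityMeasure μ] {P : α → ℝ} (hP : MemLp P 2 μ)
    (hEP : ∫ x, P x ∂μ ≠ 0) :
    ∫ x, (P x / ∫ y, P y ∂μ) ^ 2 ∂μ = 1 + Var[P; μ] / (∫ x, P x ∂μ) ^ 2 := by
  simp_rw [div_pow]
  rw [integral_div, variance_eq_sub hP]
  field_simp
  simp [Pi.pow_apply]

theorem integral_withDensity_ofReal {E : Type*} [NormedAddCommGroup E] [NormedSpace ℝ E]
    {f : α → ℝ} (hf : Measurable f) (hf0 : 0 ≤ᵐ[μ] f) (g : α → E) :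
    ∫ x, g x ∂μ.withDensity (fun x => ENNReal.ofReal (f x)) = ∫ x, f x • g x ∂μ := by
  rw [integral_withDensity_eq_integral_toReal_smul hf.ennreal_ofReal
    (ae_of_all _ fun _ => ENNReal.ofReal_lt_top)]
  refine integral_congr_ae ?_
  filter_upwards [hf0] with x hx
  rw [ENNReal.toReal_ofReal hx]

end

theorem norm_integral_withDensity_sub_le {E : Type*} [NormedAddCommGroup E]
    [InnerProductSpace ℝ E] [CompleteSpace E] [MeasurableSpace E]
    {ν₁ ν₂ : Measure E} [IsProbabilityMeasure ν₂]
    {P : E → ℝ} (hP0 : ∀ x, 0 ≤ P x) (hPm : Measurable P) (hP : MemLp P 2 ν₂)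
    (hEP : 0 < ∫ x, P x ∂ν₂)
    (hν : ν₁ = ν₂.withDensity fun x => ENNReal.ofReal (P x / ∫ x', P x' ∂ν₂))
    {m : E} (hm : m = ∫ x, x ∂ν₂) (hu : MemLp (fun x => x - m) 2 ν₂) (w : E) (η : ℝ) :
    ‖∫ x, x ∂ν₁ - (m + η • ∫ x, ⟪x - m, w⟫_ℝ • (x - m) ∂ν₂)‖
      ≤ √(Var[P; ν₂] / (∫ x, P x ∂ν₂) ^ 2 + η ^ 2 * ∫ x, ⟪x - m, w⟫_ℝ ^ 2 ∂ν₂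
          - 2 * η * ⟪∫ x, x ∂ν₁ - m, w⟫_ℝ) * √(∫ x, ‖x - m‖ ^ 2 ∂ν₂) := by
  set f := fun x => P x / ∫ x', P x' ∂ν₂
  have hf : MemLp f 2 ν₂ := by simpa only [f, div_eq_mul_inv] using hP.mul_const _
  have hf1 : ∫ x, f x ∂ν₂ = 1 := by rw [integral_div, div_self hEP.ne']
  have hu1 : Integrable (fun x => x - m) ν₂ := hu.integrable one_le_two
  have hu0 : ∫ x, (x - m) ∂ν₂ = 0 := by
    have hX : Integrable (fun x => x) ν₂ :=
      (hu1.add (integrable_const m)).congr (ae_of_all _ fun x => sub_add_cancel x m)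
    rw [integral_sub hX (integrable_const m), ← hm]
    simp
  have hφ0 : ∫ x, ⟪x - m, w⟫_ℝ ∂ν₂ = 0 := by
    simp_rw [real_inner_comm w]
    rw [integral_inner hu1, hu0, inner_zero_right]
  have hfu : Integrable (fun x => f x • (x - m)) ν₂ := (hu.smul hf).integrable le_rfl
  have hmean : ∫ x, f x • (x - m) ∂ν₂ = ∫ x, x ∂ν₁ - m := by
    have hfm : Integrable (fun x => f x • m) ν₂ := (hf.integrable one_le_two).smul_const m
    rw [hν, integral_withDensity_ofReal (hPm.div_const _)
      (ae_of_all _ fun x => div_nonneg (hP0 x) hEP.le), eq_sub_iff_add_eq]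
    calc ∫ x, f x • (x - m) ∂ν₂ + m = ∫ x, (f x • (x - m) + f x • m) ∂ν₂ := by
          rw [integral_add hfu hfm, integral_smul_const, hf1, one_smul]
      _ = ∫ x, f x • x ∂ν₂ := by simp_rw [← smul_add, sub_add_cancel]
  have hfφ : ∫ x, f x * ⟪x - m, w⟫_ℝ ∂ν₂ = ⟪∫ x, x ∂ν₁ - m, w⟫_ℝ := by
    simp_rw [← real_inner_smul_left, real_inner_comm w]
    rw [integral_inner hfu, hmean]
  have h := norm_integral_smul_sub_smul_integral_smul_le hf (hu.inner_const w) hu hf1 hφ0 hu0 η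
  rwa [hmean, hfφ, integral_div_integral_sq hP hEP.ne', add_sub_cancel_left,
    ← sub_add_eq_sub_sub] at h

/-- `ν2` is the law of `X0` given `X_t = x_t`, `P x0 = p(y | x0)`, and `hBayes` makes `ν1` the
law of `X0` given `(X_t, Y) = (x_t, y)`. -/
theorem stmt17_general {d d' : ℕ} {S : Type*}
    (ν1 ν2 : Measure (EuclideanSpace ℝ (Fin d)))
    [IsProbabilityMeasure ν1] [IsProbabilityMeasure ν2]
    (r : EuclideanSpace ℝ (Fin d) → S → ℝ) (s : S) (τ Lr : ℝ)
    (hτ : 0 < τ) (hLr : 0 ≤ Lr)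
    (hr01 : ∀ x s', r x s' ∈ Set.Icc (0:ℝ) 1)
    (hrLip : ∀ s' x x', |r x s' - r x' s'| ≤ Lr * ‖x - x'‖)
    (hrmeas : Measurable fun x => r x s)
    (P : EuclideanSpace ℝ (Fin d) → ℝ) (hPnn : ∀ x, 0 ≤ P x) (hPmeas : Measurable P)
    (hP2 : Integrable (fun x => (P x) ^ 2) ν2)
    (hEP : 0 < ∫ x, P x ∂ν2)
    (hBayes : ν1 = ν2.withDensity (fun x => ENNReal.ofReal (P x / ∫ x', P x' ∂ν2)))
    (A : EuclideanSpace ℝ (Fin d) →L[ℝ] EuclideanSpace ℝ (Fin d'))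
    (y : EuclideanSpace ℝ (Fin d')) (η : ℝ)
    (hX1 : Integrable (fun x => x) ν1) (hX2 : Integrable (fun x => x) ν2)
    (xhatty : EuclideanSpace ℝ (Fin d)) (hxhatty : xhatty = ∫ x, x ∂ν1)
    (xhatt : EuclideanSpace ℝ (Fin d)) (hxhatt : xhatt = ∫ x, x ∂ν2)
    (w : EuclideanSpace ℝ (Fin d)) (hw : w = ContinuousLinearMap.adjoint A (y - A xhatt))
    (Sigw : EuclideanSpace ℝ (Fin d))
    (hSig : Sigw = ∫ x, (inner ℝ (x - xhatt) w : ℝ) • (x - xhatt) ∂ν2)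
    (xtil : EuclideanSpace ℝ (Fin d)) (hxtil : xtil = xhatt + η • Sigw)
    (hint1 : Integrable (fun x => ‖x - xhatty‖ ^ 2) ν1)
    (hint2 : Integrable (fun x => ‖x - xhatt‖ ^ 2) ν2)
    (c4 : ℝ)
    (hc4 : c4 = 1 + variance P ν2 / (∫ x, P x ∂ν2) ^ 2
        + η ^ 2 * (∫ x, (inner ℝ (x - xhatt) w : ℝ) ^ 2 ∂ν2)
        - 2 * η * (inner ℝ (A (xhatty - xhatt)) (y - A xhatt) : ℝ)) :
    |Real.log (∫ x, Real.exp (r x s / τ) ∂ν1) - r xtil s / τ|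
      ≤ (Real.exp (1 / τ) - 1 - 1 / τ) * variance (fun x => r x s) ν1
        + (Lr / τ) * (Real.sqrt (∫ x, ‖x - xhatty‖ ^ 2 ∂ν1)
            + Real.sqrt (∫ x, ‖x - xhatt‖ ^ 2 ∂ν2) * Real.sqrt c4) := by
  have hT1 := abs_log_integral_exp_div_sub_le (μ := ν1) hrmeas.aestronglyMeasurable
    (fun x => hr01 x s) hτ
  have hT2 := abs_integral_sub_apply_integral_le hLr (hrLip s) hrmeas.aestronglyMeasurable hX1
    (hxhatty ▸ hint1)
  rw [← hxhatty] at hT2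
  have hu : MemLp (fun x => x - xhatt) 2 ν2 :=
    (memLp_two_iff_integrable_sq_norm (hX2.sub (integrable_const xhatt)).1).2 hint2
  have hmean := norm_integral_withDensity_sub_le hPnn hPmeas
    ((memLp_two_iff_integrable_sq hPmeas.aestronglyMeasurable).2 hP2) hEP hBayes hxhatt hu w η
  rw [← hxhatty, ← hSig, ← hxtil, hw, ContinuousLinearMap.adjoint_inner_right, ← hw] at hmean
  have hT3 : |r xhatty s - r xtil s| ≤ Lr * (√(∫ x, ‖x - xhatt‖ ^ 2 ∂ν2) * √c4) := by
    refine (hrLip s _ _).trans (mul_le_mul_of_nonneg_left (hmean.trans ?_) hLr)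
    rw [mul_comm]
    gcongr
    linarith
  set V := Real.log (∫ x, Real.exp (r x s / τ) ∂ν1)
  set R := ∫ x, r x s ∂ν1
  calc |V - r xtil s / τ|
      = |(V - R / τ) + (R - r xhatty s) / τ + (r xhatty s - r xtil s) / τ| := by congr 1; ring
    _ ≤ |V - R / τ| + |R - r xhatty s| / τ + |r xhatty s - r xtil s| / τ :=
        (abs_add_three _ _ _).trans_eq (by rw [abs_div, abs_div, abs_of_pos hτ])
    _ ≤ (Real.exp (1 / τ) - 1 - 1 / τ) * variance (fun x => r x s) ν1
        + Lr * √(∫ x, ‖x - xhatty‖ ^ 2 ∂ν1) / τ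
        + Lr * (√(∫ x, ‖x - xhatt‖ ^ 2 ∂ν2) * √c4) / τ := by gcongr
    _ = _ := by ring

/-- Value approximation bound (Proposition 2 of the paper). `ν2` is the conditional law of
`X0` given `X_t = x_t`, `P` is the likelihood `x0 ↦ p(y|x0)`, and `ν1 = ν2` tilted by the
normalized likelihood `f = P/E_{ν2}[P]` is the conditional law of `X0` given
`(X_t,Y) = (x_t,y)` (Bayes). With `[0,1]`-valued `L_r`-Lipschitz reward `r(·;s)`,
`V = log E_{ν1}[exp(r(X0;s)/τ)]`, `x̃^η = x̂_{0|t} + η Σ_{0|t} Aᵀ(y − A x̂_{0|t})` and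
`V̂ = r(x̃^η;s)/τ`:
`|V − V̂| ≤ c_τ·Var(r(X0;s)|x_t,y) + (L_r/τ)(√Var(X0|x_t,y) + √Var(X0|x_t)·√c₄^η)`. -/
theorem stmt17 {d d' : ℕ} {S : Type*}
    (ν1 ν2 : Measure (EuclideanSpace ℝ (Fin d)))
    [IsProbabilityMeasure ν1] [IsProbabilityMeasure ν2]
    (r : EuclideanSpace ℝ (Fin d) → S → ℝ) (s : S) (τ Lr : ℝ)
    (hτ : 0 < τ) (hLr : 0 ≤ Lr)
    (hr01 : ∀ x s', r x s' ∈ Set.Icc (0:ℝ) 1)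
    (hrLip : ∀ s' x x', |r x s' - r x' s'| ≤ Lr * ‖x - x'‖)
    (hrmeas : Measurable fun x => r x s)
    (P : EuclideanSpace ℝ (Fin d) → ℝ) (hPnn : ∀ x, 0 ≤ P x) (hPmeas : Measurable P)
    (hP : Integrable P ν2) (hP2 : Integrable (fun x => (P x) ^ 2) ν2)
    (hEP : 0 < ∫ x, P x ∂ν2)
    (hBayes : ν1 = ν2.withDensity (fun x => ENNReal.ofReal (P x / ∫ x', P x' ∂ν2)))
    (A : EuclideanSpace ℝ (Fin d) →L[ℝ] EuclideanSpace ℝ (Fin d'))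
    (y : EuclideanSpace ℝ (Fin d')) (η : ℝ)
    (hX1 : Integrable (fun x => x) ν1) (hX2 : Integrable (fun x => x) ν2)
    (xhatty : EuclideanSpace ℝ (Fin d)) (hxhatty : xhatty = ∫ x, x ∂ν1)
    (xhatt : EuclideanSpace ℝ (Fin d)) (hxhatt : xhatt = ∫ x, x ∂ν2)
    (w : EuclideanSpace ℝ (Fin d)) (hw : w = ContinuousLinearMap.adjoint A (y - A xhatt))
    (Sigw : EuclideanSpace ℝ (Fin d))
    (hSig : Sigw = ∫ x, (inner ℝ (x - xhatt) w : ℝ) • (x - xhatt) ∂ν2)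
    (xtil : EuclideanSpace ℝ (Fin d)) (hxtil : xtil = xhatt + η • Sigw)
    (hint1 : Integrable (fun x => ‖x - xhatty‖ ^ 2) ν1)
    (hint2 : Integrable (fun x => ‖x - xhatt‖ ^ 2) ν2)
    (hint3 : Integrable (fun x => (inner ℝ (x - xhatt) w : ℝ) ^ 2) ν2)
    (hint4 : Integrable (fun x => (inner ℝ (x - xhatt) w : ℝ) • (x - xhatt)) ν2)
    (c4 : ℝ)
    (hc4 : c4 = 1 + variance P ν2 / (∫ x, P x ∂ν2) ^ 2
        + η ^ 2 * (∫ x, (inner ℝ (x - xhatt) w : ℝ) ^ 2 ∂ν2)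
        - 2 * η * (inner ℝ (A (xhatty - xhatt)) (y - A xhatt) : ℝ)) :
    |Real.log (∫ x, Real.exp (r x s / τ) ∂ν1) - r xtil s / τ|
      ≤ (Real.exp (1 / τ) - 1 - 1 / τ) * variance (fun x => r x s) ν1
        + (Lr / τ) * (Real.sqrt (∫ x, ‖x - xhatty‖ ^ 2 ∂ν1)
            + Real.sqrt (∫ x, ‖x - xhatt‖ ^ 2 ∂ν2) * Real.sqrt c4) :=
  stmt17_general ν1 ν2 r s τ Lr hτ hLr hr01 hrLip hrmeas P hPnn hPmeas hP2 hEP hBayes A y η hX1 hX2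
    xhatty hxhatty xhatt hxhatt w hw Sigw hSig xtil hxtil hint1 hint2 c4 hc4
end
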